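/- arXiv:math/0509279 — 3 statements merged into one kernel-verified Lean document; each statement's English description precedes it below -/
import Mathlib

section
/- Let Y be a Polish space and F a continuous quasi-linear form on the bounded-above continuous functions C_b(Y) (valued in ℝ ∪ {-∞}). Then the formula F̃(φ) = sup{ F(ψ) : ψ ∈ C_b(Y), ψ ≤ φ } defines the unique extension of F to a continuous quasi-linear form on the lower semicontinuous functions Y → ℝ ∪ {-∞}. -/
/-!
On a metrizable space every lower semicontinuous `φ : Y → EReal` is the supremum of an increasing
sequence `a n` of bounded-above continuous functions. For such a sequence the sup formula gives
`F̃ (⨆ a n) = ⨆ F (a n)`: if `ψ ≤ ⨆ a n` is bounded-above continuous, continuity of `F` along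
`ψ ⊓ a n ↑ ψ` gives `F ψ ≤ ⨆ F (a n)`. Any functional with this property is therefore determined on
lower semicontinuous functions by its values on `C_b(Y)`, and homogeneity, quasi-linearity and
continuity pass from `C_b(Y)` to lower semicontinuous functions along the approximating sequences
(for continuity, along a diagonal sequence).
-/

open Set Metric TopologicalSpace
open scoped ENNReal

lemma EReal.continuous_const_add {lam : EReal} (hlam : lam ≠ ⊤) : Continuous (lam + ·) := by
  induction lam using EReal.rec with
  | bot => simpa only [EReal.bot_add] using continuous_const
  | coe r =>
    exact continuous_iff_continuousAt.2 fun x => (EReal.continuousAt_add (p := ((r : EReal), x))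
      (.inl (EReal.coe_ne_top r)) (.inl (EReal.coe_ne_bot r))).comp
      (continuous_const.prodMk continuous_id).continuousAt
  | top => exact absurd rfl hlam

lemma EReal.const_add_iSup {ι : Sort*} {lam : EReal} (hlam : lam ≠ ⊤) (f : ι → EReal) :
    lam + ⨆ i, f i = ⨆ i, lam + f i :=
  Monotone.map_iSup_of_continuousAt (EReal.continuous_const_add hlam).continuousAt
    (fun _ _ h => add_le_add_right h lam) (EReal.add_bot lam)

section Diagonal

variable {α : Type*} [CompleteLattice α] {a : ℕ → ℕ → α}

lemma monotone_partialSups_diag (ha : ∀ n, Monotone (a n)) :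
    Monotone fun m => partialSups (a · m) m := fun m m' h =>
  ((partialSups (a · m)).monotone h).trans (partialSups_mono (fun n => ha n h) m')

lemma iSup_partialSups_diag (ha : ∀ n, Monotone (a n)) :
    ⨆ m, partialSups (a · m) m = ⨆ n, ⨆ k, a n k := by
  refine le_antisymm (iSup_le fun m => partialSups_le _ _ _ fun n _ => le_iSup₂ (f := a) n m) ?_
  refine iSup₂_le fun n k => le_iSup_of_le (max n k) ?_
  exact (ha n (le_max_right n k)).trans (le_partialSups_of_le (a · (max n k)) (le_max_left n k))

end Diagonal

section MonotoneSups

variable {Y : Type*}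

def PreservesMonotoneSupsOn (G : (Y → EReal) → EReal) (S : Set (Y → EReal)) : Prop :=
  ∀ a : ℕ → Y → EReal, (∀ n, a n ∈ S) → Monotone a → G (fun y => ⨆ n, a n y) = ⨆ n, G (a n)

lemma PreservesMonotoneSupsOn.mono {G : (Y → EReal) → EReal} {S T : Set (Y → EReal)}
    (hG : PreservesMonotoneSupsOn G T) (hST : S ⊆ T) : PreservesMonotoneSupsOn G S :=
  fun a ha ham => hG a (fun n => hST (ha n)) ham

end MonotoneSups

section Approximation

variable {Y : Type*} [TopologicalSpace Y]

def continuousBddAbove (Y : Type*) [TopologicalSpace Y] : Set (Y → EReal) :=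
  {φ | Continuous φ ∧ ∃ c : ℝ, ∀ y, φ y ≤ (c : EReal)}

lemma sup_mem_continuousBddAbove {φ ψ : Y → EReal} (hφ : φ ∈ continuousBddAbove Y)
    (hψ : ψ ∈ continuousBddAbove Y) : φ ⊔ ψ ∈ continuousBddAbove Y := by
  obtain ⟨hφc, c, hc⟩ := hφ
  obtain ⟨hψc, d, hd⟩ := hψ
  exact ⟨hφc.sup hψc, max c d, fun y => sup_le ((hc y).trans (by simp)) ((hd y).trans (by simp))⟩

lemma inf_mem_continuousBddAbove {φ ψ : Y → EReal} (hφ : φ ∈ continuousBddAbove Y)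
    (hψ : ψ ∈ continuousBddAbove Y) : φ ⊓ ψ ∈ continuousBddAbove Y := by
  obtain ⟨hφc, c, hc⟩ := hφ
  exact ⟨hφc.inf hψ.1, c, fun y => inf_le_left.trans (hc y)⟩

lemma const_add_mem_continuousBddAbove {lam : EReal} (hlam : lam ≠ ⊤) {φ : Y → EReal}
    (hφ : φ ∈ continuousBddAbove Y) : (fun y => lam + φ y) ∈ continuousBddAbove Y := by
  obtain ⟨hφc, c, hc⟩ := hφ
  obtain ⟨r, hr, -⟩ := EReal.lt_iff_exists_real_btwn.1 (lt_top_iff_ne_top.2 hlam)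
  refine ⟨(EReal.continuous_const_add hlam).comp hφc, r + c, fun y => ?_⟩
  rw [EReal.coe_add]
  exact add_le_add hr.le (hc y)

lemma partialSups_mem_continuousBddAbove {a : ℕ → Y → EReal}
    (ha : ∀ n, a n ∈ continuousBddAbove Y) (n : ℕ) : partialSups a n ∈ continuousBddAbove Y := by
  induction n with
  | zero => simpa using ha 0
  | succ n ih => simpa [partialSups_succ] using sup_mem_continuousBddAbove ih (ha (n + 1))

lemma iSup_log_natCast_mul_infEDist {X : Type*} [PseudoEMetricSpace X] {s : Set X} {z : X}
    (hz : z ∉ closure s) : ⨆ k : ℕ, ENNReal.log (k * infEDist z s) = ⊤ := by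
  have hd : infEDist z s ≠ 0 := (infEDist_pos_iff_notMem_closure.2 hz).ne'
  calc ⨆ k : ℕ, ENNReal.log (k * infEDist z s)
      = ENNReal.logOrderIso (⨆ k : ℕ, (k : ℝ≥0∞) * infEDist z s) :=
        (ENNReal.logOrderIso.map_iSup _).symm
    _ = ⊤ := by
      rw [← ENNReal.iSup_mul, ENNReal.iSup_natCast, ENNReal.top_mul hd]
      exact ENNReal.log_top

lemma LowerSemicontinuous.exists_iSup_continuousBddAbove_eq {X : Type*} [PseudoEMetricSpace X]
    {φ : X → EReal} (hφ : LowerSemicontinuous φ) :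
    ∃ g : ℚ × ℕ → X → EReal, (∀ i, g i ∈ continuousBddAbove X) ∧ (fun x => ⨆ i, g i x) = φ := by
  -- `g (q, k)` is `⊥` off `{q < φ}` and increases to `q` on it.
  set g : ℚ × ℕ → X → EReal := fun i z =>
    ((i.1 : ℝ) : EReal) ⊓ ENNReal.log (i.2 * infEDist z (φ ⁻¹' Iic ((i.1 : ℝ) : EReal)))
  have hg_le : ∀ i, g i ≤ φ := by
    rintro ⟨q, k⟩ z
    by_cases hz : ((q : ℝ) : EReal) < φ z
    · exact inf_le_left.trans hz.le
    · simp [g, infEDist_zero_of_mem (show z ∈ φ ⁻¹' Iic _ from not_lt.1 hz)]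
  have hg_iSup : ∀ q : ℚ, ∀ z, ((q : ℝ) : EReal) < φ z → ⨆ k : ℕ, g (q, k) z = (q : ℝ) := by
    intro q z hz
    have hzs : z ∉ closure (φ ⁻¹' Iic ((q : ℝ) : EReal)) := by
      rw [(hφ.isClosed_preimage _).closure_eq]
      exact not_le.2 hz
    simp only [g, ← inf_iSup_eq, iSup_log_natCast_mul_infEDist hzs, inf_top_eq]
  refine ⟨g, fun i => ⟨?_, i.1, fun z => inf_le_left⟩,
    funext fun z => le_antisymm (iSup_le fun i => hg_le i z) ?_⟩
  · exact continuous_const.inf (ENNReal.continuous_log.comp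
      ((ENNReal.continuous_const_mul (ENNReal.natCast_ne_top _)).comp continuous_infEDist))
  · by_contra h
    obtain ⟨q, hq, hqφ⟩ := EReal.lt_iff_exists_rat_btwn.1 (not_le.1 h)
    exact hq.not_ge ((hg_iSup q z hqφ).ge.trans (iSup_le fun k => le_iSup (fun i => g i z) (q, k)))

lemma LowerSemicontinuous.exists_monotone_continuousBddAbove [PseudoMetrizableSpace Y]
    {φ : Y → EReal} (hφ : LowerSemicontinuous φ) :
    ∃ a : ℕ → Y → EReal, (∀ n, a n ∈ continuousBddAbove Y) ∧ Monotone a ∧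
      (fun y => ⨆ n, a n y) = φ := by
  let _ := pseudoMetrizableSpacePseudoMetric Y
  obtain ⟨g, hg, hgφ⟩ := hφ.exists_iSup_continuousBddAbove_eq
  obtain ⟨e, he⟩ := exists_surjective_nat (ℚ × ℕ)
  refine ⟨partialSups (g ∘ e), partialSups_mem_continuousBddAbove fun n => hg (e n),
    (partialSups _).monotone, ?_⟩
  rw [← hgφ]
  funext y
  simp only [Pi.partialSups_apply, iSup_partialSups_eq]
  exact he.iSup_comp fun i => g i y

end Approximation

section SupExtension

variable {Y : Type*} [TopologicalSpace Y] {F : (Y → EReal) → EReal}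

noncomputable def supExtension (F : (Y → EReal) → EReal) (φ : Y → EReal) : EReal :=
  ⨆ ψ ∈ {ψ ∈ continuousBddAbove Y | ψ ≤ φ}, F ψ

lemma le_supExtension (F : (Y → EReal) → EReal) {ψ φ : Y → EReal}
    (hψ : ψ ∈ continuousBddAbove Y) (hψφ : ψ ≤ φ) : F ψ ≤ supExtension F φ :=
  le_iSup₂ (f := fun ψ (_ : ψ ∈ {ψ ∈ continuousBddAbove Y | ψ ≤ φ}) => F ψ) ψ ⟨hψ, hψφ⟩

lemma supExtension_le {φ : Y → EReal} {b : EReal}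
    (h : ∀ ψ ∈ continuousBddAbove Y, ψ ≤ φ → F ψ ≤ b) : supExtension F φ ≤ b :=
  iSup₂_le fun ψ hψ => h ψ hψ.1 hψ.2

lemma supExtension_mono (F : (Y → EReal) → EReal) : Monotone (supExtension F) :=
  fun _ _ h => supExtension_le fun _ hψ hψφ => le_supExtension F hψ (hψφ.trans h)

lemma supExtension_eq_of_mem (hF : MonotoneOn F (continuousBddAbove Y)) {φ : Y → EReal}
    (hφ : φ ∈ continuousBddAbove Y) : supExtension F φ = F φ :=
  le_antisymm (supExtension_le fun _ hψ hψφ => hF hψ hφ hψφ) (le_supExtension F hφ le_rfl)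

lemma apply_le_iSup_of_le_iSup (hF : MonotoneOn F (continuousBddAbove Y))
    (hc : ∀ a : ℕ → Y → EReal, (∀ n, a n ∈ continuousBddAbove Y) → Monotone a →
      (fun y => ⨆ n, a n y) ∈ continuousBddAbove Y → F (fun y => ⨆ n, a n y) = ⨆ n, F (a n))
    {χ : Y → EReal} (hχ : χ ∈ continuousBddAbove Y) {a : ℕ → Y → EReal}
    (ha : ∀ n, a n ∈ continuousBddAbove Y) (ham : Monotone a) (hχa : ∀ y, χ y ≤ ⨆ n, a n y) :
    F χ ≤ ⨆ n, F (a n) := by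
  have hχ_eq : (fun y => ⨆ n, (χ ⊓ a n) y) = χ :=
    funext fun y => by simp only [Pi.inf_apply, ← inf_iSup_eq, inf_eq_left.2 (hχa y)]
  have hχa_mem : ∀ n, χ ⊓ a n ∈ continuousBddAbove Y :=
    fun n => inf_mem_continuousBddAbove hχ (ha n)
  have hχ_mem : (fun y => ⨆ n, (χ ⊓ a n) y) ∈ continuousBddAbove Y := by
    rw [hχ_eq]
    exact hχ
  calc F χ = F (fun y => ⨆ n, (χ ⊓ a n) y) := congrArg F hχ_eq.symm
    _ = ⨆ n, F (χ ⊓ a n) := hc _ hχa_mem (fun m n h => inf_le_inf_left χ (ham h)) hχ_mem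
    _ ≤ ⨆ n, F (a n) := iSup_mono fun n => hF (hχa_mem n) (ha n) inf_le_right

lemma preservesMonotoneSupsOn_supExtension (hF : MonotoneOn F (continuousBddAbove Y))
    (hc : ∀ a : ℕ → Y → EReal, (∀ n, a n ∈ continuousBddAbove Y) → Monotone a →
      (fun y => ⨆ n, a n y) ∈ continuousBddAbove Y → F (fun y => ⨆ n, a n y) = ⨆ n, F (a n)) :
    PreservesMonotoneSupsOn (supExtension F) (continuousBddAbove Y) := fun a ha ham =>
  le_antisymm
    (supExtension_le fun _ hχ hχa => (apply_le_iSup_of_le_iSup hF hc hχ ha ham hχa).trans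
      (iSup_mono fun n => le_supExtension F (ha n) le_rfl))
    (iSup_le fun n => supExtension_mono F fun y => le_iSup (fun n => a n y) n)

end SupExtension

namespace PreservesMonotoneSupsOn

variable {Y : Type*} [TopologicalSpace Y] [PseudoMetrizableSpace Y] {G : (Y → EReal) → EReal}

lemma eq_of_eqOn (hG : PreservesMonotoneSupsOn G (continuousBddAbove Y))
    {G' : (Y → EReal) → EReal} (hG' : PreservesMonotoneSupsOn G' (continuousBddAbove Y))
    (hGG' : EqOn G G' (continuousBddAbove Y)) {φ : Y → EReal} (hφ : LowerSemicontinuous φ) :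
    G φ = G' φ := by
  obtain ⟨a, ha, ham, rfl⟩ := hφ.exists_monotone_continuousBddAbove
  rw [hG a ha ham, hG' a ha ham]
  exact iSup_congr fun n => hGG' (ha n)

lemma map_const_add (hG : PreservesMonotoneSupsOn G (continuousBddAbove Y)) {lam : EReal}
    (hlam : lam ≠ ⊤) (hhom : ∀ φ ∈ continuousBddAbove Y, G (fun y => lam + φ y) = lam + G φ)
    {φ : Y → EReal} (hφ : LowerSemicontinuous φ) : G (fun y => lam + φ y) = lam + G φ := by
  obtain ⟨a, ha, ham, rfl⟩ := hφ.exists_monotone_continuousBddAbove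
  have hlam_a : ∀ n, (fun y => lam + a n y) ∈ continuousBddAbove Y :=
    fun n => const_add_mem_continuousBddAbove hlam (ha n)
  have hlam_am : Monotone fun n y => lam + a n y := fun m n h y => add_le_add_right (ham h y) lam
  simp only [EReal.const_add_iSup hlam]
  rw [hG _ hlam_a hlam_am, hG a ha ham, EReal.const_add_iSup hlam]
  exact iSup_congr fun n => hhom _ (ha n)

lemma map_sup_le (hG : PreservesMonotoneSupsOn G (continuousBddAbove Y)) {α : EReal}
    (hql : ∀ φ ∈ continuousBddAbove Y, ∀ ψ ∈ continuousBddAbove Y,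
      G (φ ⊔ ψ) ≤ α + max (G φ) (G ψ))
    {φ ψ : Y → EReal} (hφ : LowerSemicontinuous φ) (hψ : LowerSemicontinuous ψ) :
    G (φ ⊔ ψ) ≤ α + max (G φ) (G ψ) := by
  obtain ⟨a, ha, ham, rfl⟩ := hφ.exists_monotone_continuousBddAbove
  obtain ⟨b, hb, hbm, rfl⟩ := hψ.exists_monotone_continuousBddAbove
  have hab : ((fun y => ⨆ n, a n y) ⊔ fun y => ⨆ n, b n y) = fun y => ⨆ n, (a n ⊔ b n) y :=
    funext fun y => iSup_sup_eq.symm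
  rw [hab, hG _ (fun n => sup_mem_continuousBddAbove (ha n) (hb n)) (ham.sup hbm),
    hG a ha ham, hG b hb hbm]
  refine iSup_le fun n => (hql _ (ha n) _ (hb n)).trans ?_
  gcongr
  exacts [le_iSup (fun n => G (a n)) n, le_iSup (fun n => G (b n)) n]

lemma to_lowerSemicontinuous (hG : PreservesMonotoneSupsOn G (continuousBddAbove Y))
    (hmono : Monotone G) : PreservesMonotoneSupsOn G {φ | LowerSemicontinuous φ} := by
  intro φ hφ hφm
  choose a ha ham haφ using fun n => (hφ n).exists_monotone_continuousBddAbove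
  set ξ : ℕ → Y → EReal := fun m => partialSups (a · m) m
  have hξ : ∀ m, ξ m ∈ continuousBddAbove Y :=
    fun m => partialSups_mem_continuousBddAbove (fun n => ha n m) m
  have hξφ : ∀ m, ξ m ≤ φ m := fun m => partialSups_le _ _ _ fun n hn y =>
    ((le_iSup (fun k => a n k y) m).trans_eq (congrFun (haφ n) y)).trans (hφm hn y)
  have hξ_iSup : (fun y => ⨆ m, ξ m y) = fun y => ⨆ n, φ n y := by
    funext y
    simp only [ξ, Pi.partialSups_apply]
    rw [iSup_partialSups_diag fun n _ _ h => ham n h y]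
    simp_rw [← haφ]
  apply le_antisymm
  · rw [← hξ_iSup, hG ξ hξ (monotone_partialSups_diag ham)]
    exact iSup_mono fun m => hmono (hξφ m)
  · exact iSup_le fun n => hmono fun y => le_iSup (fun n => φ n y) n

end PreservesMonotoneSupsOn

/-- Any continuous quasi-linear form `F` on the bounded-above continuous
functions `C_b(Y)` on a Polish space `Y` (valued in `ℝ ∪ {-∞}`) extends
uniquely to a continuous quasi-linear form on the lower semicontinuous
functions, namely via `F̃(φ) = sup { F ψ | ψ ∈ C_b(Y), ψ ≤ φ }`. -/
theorem extension_to_lsc_unique {Y : Type*} [TopologicalSpace Y] [PolishSpace Y]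
    (F : (Y → EReal) → EReal) :
    let Cb : Set (Y → EReal) := {φ | Continuous φ ∧ ∃ c : ℝ, ∀ y, φ y ≤ (c : EReal)}
    let Lsc : Set (Y → EReal) := {φ | LowerSemicontinuous φ ∧ ∀ y, φ y ≠ ⊤}
    let Ext : ((Y → EReal) → EReal) → Prop := fun G =>
      (∀ φ ∈ Cb, G φ = F φ) ∧
      (∀ φ ∈ Lsc, ∀ ψ ∈ Lsc, φ ≤ ψ → G φ ≤ G ψ) ∧
      (∀ (lam : EReal), lam ≠ ⊤ → ∀ φ ∈ Lsc,
        G (fun y => lam + φ y) = lam + G φ) ∧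
      (∃ α : EReal, α ≠ ⊤ ∧ ∀ φ ∈ Lsc, ∀ ψ ∈ Lsc,
        G (φ ⊔ ψ) ≤ α + max (G φ) (G ψ)) ∧
      (∀ φ : ℕ → Y → EReal, (∀ n, φ n ∈ Lsc) → Monotone φ →
        G (fun y => ⨆ n, φ n y) = ⨆ n, G (φ n))
    -- `F` is a continuous quasi-linear form on `C_b(Y)`:
    (∀ φ ∈ Cb, ∀ ψ ∈ Cb, φ ≤ ψ → F φ ≤ F ψ) →
    (∀ (lam : EReal), lam ≠ ⊤ → ∀ φ ∈ Cb, F (fun y => lam + φ y) = lam + F φ) →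
    (∃ α : EReal, α ≠ ⊤ ∧ ∀ φ ∈ Cb, ∀ ψ ∈ Cb,
      F (φ ⊔ ψ) ≤ α + max (F φ) (F ψ)) →
    (∀ φ : ℕ → Y → EReal, (∀ n, φ n ∈ Cb) → Monotone φ →
      (fun y => ⨆ n, φ n y) ∈ Cb →
      F (fun y => ⨆ n, φ n y) = ⨆ n, F (φ n)) →
    -- then the sup-formula is the unique extension:
    (Ext (fun φ => ⨆ ψ ∈ {ψ ∈ Cb | ψ ≤ φ}, F ψ) ∧
      ∀ G, Ext G → ∀ φ ∈ Lsc, G φ = ⨆ ψ ∈ {ψ ∈ Cb | ψ ≤ φ}, F ψ) := by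
  intro Cb Lsc Ext monoF homF ⟨α, hα, qlF⟩ contF
  have hGF : EqOn (supExtension F) F Cb := fun φ hφ => supExtension_eq_of_mem monoF hφ
  have hG : PreservesMonotoneSupsOn (supExtension F) Cb :=
    preservesMonotoneSupsOn_supExtension monoF contF
  have hCb_Lsc : Cb ⊆ Lsc := fun φ ⟨hφc, c, hc⟩ =>
    ⟨hφc.lowerSemicontinuous, fun y => ((hc y).trans_lt (EReal.coe_lt_top c)).ne⟩
  have hGhom : ∀ lam ≠ ⊤, ∀ φ ∈ Cb, supExtension F (fun y => lam + φ y) = lam + supExtension F φ :=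
    fun lam hlam φ hφ => by
      rw [hGF (const_add_mem_continuousBddAbove hlam hφ), hGF hφ, homF lam hlam φ hφ]
  have hGql : ∀ φ ∈ Cb, ∀ ψ ∈ Cb,
      supExtension F (φ ⊔ ψ) ≤ α + max (supExtension F φ) (supExtension F ψ) :=
    fun φ hφ ψ hψ => by
      rw [hGF (sup_mem_continuousBddAbove hφ hψ), hGF hφ, hGF hψ]
      exact qlF φ hφ ψ hψ
  refine ⟨⟨hGF, fun φ _ ψ _ h => supExtension_mono F h,
    fun lam hlam φ hφ => hG.map_const_add hlam (hGhom lam hlam) hφ.1,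
    ⟨α, hα, fun φ hφ ψ hψ => hG.map_sup_le hGql hφ.1 hψ.1⟩,
    (hG.to_lowerSemicontinuous (supExtension_mono F)).mono fun φ hφ => hφ.1⟩, ?_⟩
  rintro G ⟨hGF', -, -, -, hGcont⟩ φ hφ
  exact (PreservesMonotoneSupsOn.mono hGcont hCb_Lsc).eq_of_eqOn hG
    (fun ψ hψ => (hGF' ψ hψ).trans (hGF hψ).symm) hφ.1
end

section
/- Let Y be a metric space and F a max-plus linear form on C_b(Y) (continuous functions Y → ℝ ∪ {-∞} bounded above) that is continuous (preserves nondecreasing converging sequences) and admits a density, i.e., F(φ) = sup_{y∈Y}(φ(y) − f(y)) for some f : Y → ℝ ∪ {±∞}. Then F is tight, meaning inf over compact K ⊂ Y of F(1_{Y∖K}) = −∞, if and only if the lower semicontinuous hull of f is inf-compact, i.e., all sublevel sets {y : f_lsc(y) ≤ α}, α ∈ ℝ, are compact. -/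
/-! If `lscHull f` is inf-compact, the form is at most `-β` on the max-plus indicator of the
open set `{lscHull f > β}`, whose complement is compact. Conversely, a density and its l.s.c. hull
give the same supremum against continuous test functions; testing against one that vanishes at
`y₀ ∉ K` and equals `⊥` on `K` yields `F(1_{Kᶜ}) ≥ -lscHull f y₀`, so `F(1_{Kᶜ}) < -α` forces
`{lscHull f ≤ α} ⊆ K`. -/

theorem EReal.sub_le_coe_comm {a b : EReal} {c : ℝ} : a - b ≤ c ↔ a - c ≤ b := by
  rw [EReal.sub_le_iff_le_add (.inr (coe_ne_top c)) (.inr (coe_ne_bot c)),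
    EReal.sub_le_iff_le_add (.inl (coe_ne_bot c)) (.inl (coe_ne_top c)), add_comm]

theorem EReal.continuous_sub_coe (c : ℝ) : Continuous fun x : EReal => x - c :=
  continuous_iff_continuousAt.2 fun _ =>
    (EReal.continuousAt_add (.inr (by simp)) (.inr (by simp))).comp
      (continuous_id.prodMk continuous_const).continuousAt

open Classical in
noncomputable def maxPlusIndicator {Y : Type*} (A : Set Y) : Y → EReal :=
  fun y => if y ∈ A then 0 else ⊥

section
variable {Y : Type*} [TopologicalSpace Y]

noncomputable def lscHull (f : Y → EReal) : Y → EReal :=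
  fun y => ⨆ g ∈ {g : Y → EReal | LowerSemicontinuous g ∧ g ≤ f}, g y

/-- The value on an l.s.c. `φ` of the max-plus form with density `f` on `C_b(Y)`;
`maxPlusFormExt` is its maximal extension to all functions. -/
noncomputable def maxPlusForm (f φ : Y → EReal) : EReal :=
  ⨆ ψ ∈ {ψ : Y → EReal | (Continuous ψ ∧ ∃ c : ℝ, ∀ y, ψ y ≤ c) ∧ ψ ≤ φ}, ⨆ y, ψ y - f y

noncomputable def maxPlusFormExt (f φ : Y → EReal) : EReal :=
  ⨅ χ ∈ {χ : Y → EReal | LowerSemicontinuous χ ∧ φ ≤ χ}, maxPlusForm f χ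

theorem lscHull_le (f : Y → EReal) : lscHull f ≤ f :=
  fun _ => iSup₂_le fun _ hg => hg.2 _

theorem le_lscHull {f g : Y → EReal} (hg : LowerSemicontinuous g) (hgf : g ≤ f) :
    g ≤ lscHull f :=
  fun _ => le_iSup₂_of_le g ⟨hg, hgf⟩ le_rfl

theorem lowerSemicontinuous_lscHull (f : Y → EReal) : LowerSemicontinuous (lscHull f) :=
  lowerSemicontinuous_biSup fun _ hg => hg.1

theorem maxPlusForm_mono (f : Y → EReal) : Monotone (maxPlusForm f) :=
  fun _ _ h => iSup₂_le fun ψ hψ => le_iSup₂_of_le ψ ⟨hψ.1, hψ.2.trans h⟩ le_rfl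

theorem maxPlusFormExt_eq {f φ : Y → EReal} (hφ : LowerSemicontinuous φ) :
    maxPlusFormExt f φ = maxPlusForm f φ :=
  le_antisymm (iInf₂_le φ ⟨hφ, le_rfl⟩) (le_iInf₂ fun _ hχ => maxPlusForm_mono f hχ.2)

theorem lowerSemicontinuous_maxPlusIndicator {U : Set Y} (hU : IsOpen U) :
    LowerSemicontinuous (maxPlusIndicator U) := by
  refine lowerSemicontinuous_iff_isOpen_preimage.2 fun a => ?_
  by_cases ha : a < 0
  · convert hU using 1
    ext y
    by_cases hy : y ∈ U <;> simp [maxPlusIndicator, hy, ha]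
  · convert isOpen_empty
    ext y
    by_cases hy : y ∈ U <;> simp [maxPlusIndicator, hy, not_lt.1 ha]

theorem exists_continuous_le_maxPlusIndicator [CompletelyRegularSpace Y] {U : Set Y}
    (hU : IsOpen U) {y₀ : Y} (hy₀ : y₀ ∈ U) :
    ∃ ψ : Y → EReal, Continuous ψ ∧ ψ ≤ maxPlusIndicator U ∧ ψ y₀ = 0 := by
  obtain ⟨g, hg, hgy₀, hgU⟩ := (completelyRegularSpace_iff_isOpen.1 ‹_›) y₀ U hU hy₀
  refine ⟨fun y => ENNReal.log (ENNReal.ofReal (1 - g y)),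
    ENNReal.continuous_log.comp (ENNReal.continuous_ofReal.comp (by fun_prop)), fun y => ?_,
    by simp [hgy₀]⟩
  by_cases hy : y ∈ U
  · simp only [maxPlusIndicator, hy, if_true]
    exact ENNReal.log_le_zero_iff.2 (ENNReal.ofReal_le_one.2 (by linarith [(g y).2.1]))
  · simp [maxPlusIndicator, hy, hgU hy]

/-- For real `c`, `ψ - c ≤ f` forces `ψ - c ≤ lscHull f` because `ψ - c` is l.s.c. -/
theorem sub_lscHull_le_iSup_sub (f : Y → EReal) {ψ : Y → EReal} (hψ : LowerSemicontinuous ψ)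
    (y₀ : Y) : ψ y₀ - lscHull f y₀ ≤ ⨆ y, ψ y - f y := by
  refine EReal.le_of_forall_lt_iff_le.1 fun c hc => EReal.sub_le_coe_comm.2 ?_
  have hψc : LowerSemicontinuous fun y => ψ y - c :=
    (EReal.continuous_sub_coe c).comp_lowerSemicontinuous hψ
      fun _ _ h => EReal.sub_le_sub h le_rfl
  refine le_lscHull hψc (fun y => EReal.sub_le_coe_comm.1 ?_) y₀
  exact (le_iSup (fun y => ψ y - f y) y).trans hc.le

theorem maxPlusForm_maxPlusIndicator_le {f : Y → EReal} {A : Set Y} {β : ℝ}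
    (hf : ∀ y ∈ A, (β : EReal) ≤ f y) : maxPlusForm f (maxPlusIndicator A) ≤ -β := by
  refine iSup₂_le fun ψ hψ => iSup_le fun y => ?_
  by_cases hy : y ∈ A
  · have hψy : ψ y ≤ 0 := by simpa [maxPlusIndicator, hy] using hψ.2 y
    simpa using EReal.sub_le_sub hψy (hf y hy)
  · have hψy : ψ y = ⊥ := le_bot_iff.1 (by simpa [maxPlusIndicator, hy] using hψ.2 y)
    simp [hψy]

theorem neg_lscHull_le_maxPlusForm_maxPlusIndicator [CompletelyRegularSpace Y] (f : Y → EReal)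
    {U : Set Y} (hU : IsOpen U) {y₀ : Y} (hy₀ : y₀ ∈ U) :
    -lscHull f y₀ ≤ maxPlusForm f (maxPlusIndicator U) := by
  obtain ⟨ψ, hψ, hψU, hψy₀⟩ := exists_continuous_le_maxPlusIndicator hU hy₀
  have hψb : ∀ y, ψ y ≤ (0 : ℝ) :=
    fun y => (hψU y).trans (by unfold maxPlusIndicator; split_ifs <;> simp)
  calc -lscHull f y₀ = ψ y₀ - lscHull f y₀ := by rw [hψy₀, zero_sub]
    _ ≤ ⨆ y, ψ y - f y := sub_lscHull_le_iSup_sub f hψ.lowerSemicontinuous y₀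
    _ ≤ maxPlusForm f (maxPlusIndicator U) :=
      le_iSup₂_of_le ψ ⟨⟨hψ, 0, hψb⟩, hψU⟩ le_rfl

end

open Classical in
/-- A continuous max-plus linear form on `C_b(Y)` with density `f`
(`F φ = ⨆ y, φ y - f y`), extended to subsets via its extensions to l.s.c.
and then to arbitrary functions, is tight (the infimum over compact `K` of
`F(1_{Y∖K})` equals `-∞`) if and only if the lower semicontinuous hull of `f`
is inf-compact (all real sublevel sets are compact). -/
theorem tight_iff_lsc_hull_infCompact {Y : Type*} [MetricSpace Y]
    (f : Y → EReal) :
    let Cb : Set (Y → EReal) := {ψ | Continuous ψ ∧ ∃ c : ℝ, ∀ y, ψ y ≤ (c : EReal)}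
    -- extension of `F` to l.s.c. functions
    let Flsc : (Y → EReal) → EReal :=
      fun φ => ⨆ ψ ∈ {ψ ∈ Cb | ψ ≤ φ}, ⨆ y, ψ y + (-(f y))
    -- maximal extension of `F` to arbitrary functions
    let Fall : (Y → EReal) → EReal :=
      fun φ => ⨅ χ ∈ {χ : Y → EReal | LowerSemicontinuous χ ∧ φ ≤ χ}, Flsc χ
    -- max-plus characteristic function of a set
    let ind : Set Y → Y → EReal := fun A y => if y ∈ A then (0 : EReal) else ⊥
    -- l.s.c. hull of `f`
    let flsc : Y → EReal := fun y => ⨆ g ∈ {g : Y → EReal | LowerSemicontinuous g ∧ g ≤ f}, g y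
    (⨅ K ∈ {K : Set Y | IsCompact K}, Fall (ind Kᶜ)) = ⊥ ↔
      ∀ α : ℝ, IsCompact {y | flsc y ≤ (α : EReal)} := by
  show (⨅ K ∈ {K : Set Y | IsCompact K}, maxPlusFormExt f (maxPlusIndicator Kᶜ)) = ⊥ ↔
    ∀ α : ℝ, IsCompact {y | lscHull f y ≤ α}
  have hext {K : Set Y} (hK : IsCompact K) :
      maxPlusFormExt f (maxPlusIndicator Kᶜ) = maxPlusForm f (maxPlusIndicator Kᶜ) :=
    maxPlusFormExt_eq (lowerSemicontinuous_maxPlusIndicator hK.isClosed.isOpen_compl)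
  simp only [EReal.eq_bot_iff_forall_lt, iInf_lt_iff]
  constructor
  · intro htight α
    obtain ⟨K, hK, hKα⟩ := htight (-α)
    rw [hext hK] at hKα
    refine hK.of_isClosed_subset ((lowerSemicontinuous_lscHull f).isClosed_preimage α)
      fun y hy => by_contra fun hyK => hKα.not_ge ?_
    calc ((-α : ℝ) : EReal) = -α := EReal.coe_neg α
      _ ≤ -lscHull f y := EReal.neg_le_neg_iff.2 hy
      _ ≤ _ := neg_lscHull_le_maxPlusForm_maxPlusIndicator f hK.isClosed.isOpen_compl hyK
  · intro hcomp r
    refine ⟨_, hcomp (1 - r), ?_⟩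
    rw [hext (hcomp (1 - r))]
    refine (maxPlusForm_maxPlusIndicator_le (β := 1 - r) fun y hy => ?_).trans_lt ?_
    · exact (le_of_not_ge (show ¬lscHull f y ≤ _ from hy)).trans (lscHull_le f y)
    · rw [← EReal.coe_neg]; exact_mod_cast (by linarith : -(1 - r) < r)
end

section
/- Let r, α, σ with α > r, σ > 0, and let g : ℝ → ℝ ∪ {+∞} be defined by g(x) = x·( r + (α−r)²/(2σ²(1−x)) ) for 0 ≤ x < 1 and g(x) = +∞ otherwise. Then the Legendre–Fenchel transform g*(y) = sup_{x∈ℝ}(xy − g(x)) is given by g*(y) = (√(y−r) − (α−r)/(√2 σ))² for y ≥ z₀ := r + (α−r)²/(2σ²), and g*(y) = 0 for y < z₀. -/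
/-!
Write `y - r = s²` and `c = (α - r)² / (2σ²) = d²` with `d = (α - r)/(√2 σ)`. On `[0, 1)` the
quantity maximised is `x s² - x d² / (1 - x)`, and `(1 - x)` times its gap to `(s - d)²` is the
square `((1 - x) s - d)²`; so for `d ≤ s` the supremum `(s - d)²` is attained at `x = 1 - d / s`.
For `y - r < c` the quantity `x (y - r) - x c / (1 - x)` is at most `x (y - r - c) ≤ 0`, and it
vanishes at `x = 0`.
-/

theorem mul_sub_mul_div_one_sub_le_sq {x : ℝ} (hx : x < 1) (s d : ℝ) :
    x * s ^ 2 - x * (d ^ 2 / (1 - x)) ≤ (s - d) ^ 2 := by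
  have hpos : 0 < 1 - x := sub_pos.mpr hx
  have hgap : ((s - d) ^ 2 - (x * s ^ 2 - x * (d ^ 2 / (1 - x)))) * (1 - x)
      = ((1 - x) * s - d) ^ 2 := by
    field_simp
    ring
  exact sub_nonneg.mp ((mul_nonneg_iff_of_pos_right hpos).mp (hgap ▸ sq_nonneg _))

theorem mul_sub_mul_div_one_sub_eq_sq {s : ℝ} (hs : s ≠ 0) (d : ℝ) :
    (1 - d / s) * s ^ 2 - (1 - d / s) * (d ^ 2 / (1 - (1 - d / s))) = (s - d) ^ 2 := by
  rcases eq_or_ne d 0 with rfl | hd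
  · simp
  · have hratio : d ^ 2 / (d / s) = d * s := by field_simp
    rw [sub_sub_cancel, hratio]
    field_simp

theorem mul_sub_mul_div_one_sub_nonpos {x u c : ℝ} (hx₀ : 0 ≤ x) (hx₁ : x < 1) (hc : 0 ≤ c)
    (hu : u ≤ c) : x * u - x * (c / (1 - x)) ≤ 0 := by
  have hc_le : c ≤ c / (1 - x) := le_div_self hc (by linarith) (by linarith)
  nlinarith

theorem EReal.coe_add_neg_ite_top (p : Prop) [Decidable p] (a b : ℝ) :
    (a : EReal) + -(if p then (b : EReal) else ⊤) = if p then ((a - b : ℝ) : EReal) else ⊥ := by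
  split_ifs <;> simp [sub_eq_add_neg]

theorem EReal.iSup_ite_coe_bot_eq {ι : Type*} (p : ι → Prop) [DecidablePred p] {f : ι → ℝ} {M : ℝ}
    (hle : ∀ i, p i → f i ≤ M) {i₀ : ι} (hi₀ : p i₀) (heq : f i₀ = M) :
    ⨆ i, (if p i then (f i : EReal) else ⊥) = M := by
  refine le_antisymm (iSup_le fun i => ?_) (le_iSup_of_le i₀ (by simp [hi₀, heq]))
  split_ifs with hi
  · exact EReal.coe_le_coe_iff.mpr (hle i hi)
  · exact bot_le

open Classical in
/-- The Legendre–Fenchel transform of the Merton model value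
`g(x) = x(r + (α−r)²/(2σ²(1−x)))` on `[0,1)` (`+∞` elsewhere):
`g*(y) = (√(y−r) − (α−r)/(√2 σ))²` for `y ≥ z₀ := r + (α−r)²/(2σ²)`, and
`g*(y) = 0` for `y < z₀`. -/
theorem merton_conjugate (r α σ : ℝ) (hα : r < α) (hσ : 0 < σ) :
    let g : ℝ → EReal := fun x =>
      if 0 ≤ x ∧ x < 1 then
        ((x * (r + (α - r) ^ 2 / (2 * σ ^ 2 * (1 - x))) : ℝ) : EReal)
      else ⊤
    let gstar : ℝ → EReal := fun y => ⨆ x : ℝ, ((x * y : ℝ) : EReal) + (-(g x))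
    let z₀ : ℝ := r + (α - r) ^ 2 / (2 * σ ^ 2)
    (∀ y : ℝ, z₀ ≤ y →
      gstar y = (((Real.sqrt (y - r) - (α - r) / (Real.sqrt 2 * σ)) ^ 2 : ℝ) : EReal)) ∧
    (∀ y : ℝ, y < z₀ → gstar y = (0 : EReal)) := by
  intro g gstar z₀
  set c := (α - r) ^ 2 / (2 * σ ^ 2) with hc_def
  have hc : 0 < c := by have := sub_pos.mpr hα; positivity
  have hgstar : ∀ y, gstar y = ⨆ x : ℝ,
      if 0 ≤ x ∧ x < 1 then ((x * (y - r) - x * (c / (1 - x)) : ℝ) : EReal) else ⊥ := by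
    intro y
    refine iSup_congr fun x => ?_
    rw [EReal.coe_add_neg_ite_top, hc_def, div_div]
    ring_nf
  refine ⟨fun y hy => ?_, fun y hy => ?_⟩
  · set s := √(y - r)
    set d := (α - r) / (√2 * σ)
    have hd_sq : d ^ 2 = c := by rw [div_pow, mul_pow, Real.sq_sqrt zero_le_two]
    have hs_sq : s ^ 2 = y - r := Real.sq_sqrt (by linarith)
    have hd : 0 < d := by have := sub_pos.mpr hα; positivity
    have hds : d ≤ s := Real.le_sqrt_of_sq_le (by linarith)
    have hs : 0 < s := hd.trans_le hds
    rw [hgstar, ← hs_sq, ← hd_sq]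
    refine EReal.iSup_ite_coe_bot_eq _ (fun x hx => mul_sub_mul_div_one_sub_le_sq hx.2 s d)
      ⟨?_, ?_⟩ (mul_sub_mul_div_one_sub_eq_sq hs.ne' d)
    · exact sub_nonneg.mpr ((div_le_one hs).mpr hds)
    · exact sub_lt_self 1 (div_pos hd hs)
  · rw [hgstar]
    refine EReal.iSup_ite_coe_bot_eq _
      (fun x hx => mul_sub_mul_div_one_sub_nonpos hx.1 hx.2 hc.le (by linarith))
      ⟨le_rfl, one_pos⟩ (by simp)
end
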